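/- Let E be a field and V an E-vector space equipped with: (i) a Lie module structure over the matrix Lie algebra gl₂(E) of 2×2 matrices over E, written X·v; and (ii) an E-linear action of the group GL₂(E) of invertible 2×2 matrices over E, written g•v; such that the compatibility g•(X·v) = (g X g⁻¹)·(g•v) holds for all g ∈ GL₂(E), X ∈ gl₂(E), v ∈ V. Let e = E₁₂ and f = E₂₁ be the elementary matrices, and set M = {v ∈ V : e^n·v = 0 for some n ≥ 1}. Assume that for every v ∈ M there exists m ≥ 1 with f^m·v = 0. Then M is a GL₂(E)-stable E-subspace of V. -/

import Mathlib

open Matrix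

attribute [local instance 100] LieRing.ofAssociativeRing

section Aux
variable {E V : Type*} [Field E] [AddCommGroup V] [Module E V]
  [LieRingModule (Matrix (Fin 2) (Fin 2) E) V]
  [LieModule E (Matrix (Fin 2) (Fin 2) E) V]

private lemma iter_compat (ρ : GL (Fin 2) E →* (V →ₗ[E] V))
    (compat : ∀ (g : GL (Fin 2) E) (X : Matrix (Fin 2) (Fin 2) E) (v : V),
      ρ g ⁅X, v⁆ =
        ⁅(g : Matrix (Fin 2) (Fin 2) E) * X * ((g : Matrix (Fin 2) (Fin 2) E))⁻¹, (ρ g) v⁆)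
    (g : GL (Fin 2) E) (X : Matrix (Fin 2) (Fin 2) E) (n : ℕ) (v : V) :
    ρ g (((LieModule.toEnd E (Matrix (Fin 2) (Fin 2) E) V X) ^ n) v) =
      ((LieModule.toEnd E (Matrix (Fin 2) (Fin 2) E) V
        ((g : Matrix (Fin 2) (Fin 2) E) * X * ((g : Matrix (Fin 2) (Fin 2) E))⁻¹)) ^ n) (ρ g v) := by
  induction n generalizing v with
  | zero => simp
  | succ n ih =>
    rw [pow_succ, pow_succ]
    simp only [Module.End.mul_apply]
    rw [LieModule.toEnd_apply_apply, ih, LieModule.toEnd_apply_apply, ← compat,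
      ← LieModule.toEnd_apply_apply E (Matrix (Fin 2) (Fin 2) E) V X]

/-- stability under upper-triangular elements -/
private lemma upper_step (ρ : GL (Fin 2) E →* (V →ₗ[E] V))
    (compat : ∀ (g : GL (Fin 2) E) (X : Matrix (Fin 2) (Fin 2) E) (v : V),
      ρ g ⁅X, v⁆ =
        ⁅(g : Matrix (Fin 2) (Fin 2) E) * X * ((g : Matrix (Fin 2) (Fin 2) E))⁻¹, (ρ g) v⁆)
    (g : GL (Fin 2) E) (hg : (g : Matrix (Fin 2) (Fin 2) E) 1 0 = 0) (v : V)
    (hv : ∃ n : ℕ, 1 ≤ n ∧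
        ((LieModule.toEnd E (Matrix (Fin 2) (Fin 2) E) V (single 0 1 1)) ^ n) v = 0) :
    ∃ n : ℕ, 1 ≤ n ∧
        ((LieModule.toEnd E (Matrix (Fin 2) (Fin 2) E) V (single 0 1 1)) ^ n)
          (ρ g v) = 0 := by
  obtain ⟨n, hn, h0⟩ := hv
  set A : Matrix (Fin 2) (Fin 2) E := (g : Matrix (Fin 2) (Fin 2) E) with hA
  have hdetu : IsUnit A.det := (Matrix.isUnit_iff_isUnit_det _).mp g.isUnit
  have hdet : A.det ≠ 0 := hdetu.ne_zero
  have hdet2 : A.det = A 0 0 * A 1 1 := by rw [Matrix.det_fin_two, hg]; ring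
  have ha : A 0 0 ≠ 0 := fun h => hdet (by rw [hdet2, h, zero_mul])
  have hd : A 1 1 ≠ 0 := fun h => hdet (by rw [hdet2, h, mul_zero])
  set c : E := A 0 0 * (A 1 1)⁻¹ with hc
  have hcne : c ≠ 0 := mul_ne_zero ha (inv_ne_zero hd)
  have key : A * single 0 1 (1:E) = (c • single 0 1 (1:E)) * A := by
    ext i j
    fin_cases i <;> fin_cases j <;>
      simp [Matrix.mul_apply, Fin.sum_univ_two, Matrix.single, hg, hc] <;>
      field_simp
  have conj : A * single 0 1 (1:E) * A⁻¹ = c • single 0 1 (1:E) := by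
    rw [key, mul_assoc, Matrix.mul_nonsing_inv _ hdetu, mul_one]
  have := iter_compat ρ compat g (single 0 1 (1:E)) n v
  rw [h0, map_zero] at this
  rw [← hA, conj, map_smul, smul_pow, LinearMap.smul_apply] at this
  refine ⟨n, hn, ?_⟩
  have := (smul_eq_zero.mp this.symm).resolve_left (pow_ne_zero n hcne)
  exact this


private def wMat : Matrix (Fin 2) (Fin 2) E := !![0,1;1,0]

private lemma wMat_mul_self : (wMat : Matrix (Fin 2) (Fin 2) E) * wMat = 1 := by
  ext i j
  fin_cases i <;> fin_cases j <;>
    simp [wMat, Matrix.mul_apply, Fin.sum_univ_two, Matrix.one_apply]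

private def wGL : GL (Fin 2) E := ⟨wMat, wMat, wMat_mul_self, wMat_mul_self⟩

private lemma w_step (ρ : GL (Fin 2) E →* (V →ₗ[E] V))
    (compat : ∀ (g : GL (Fin 2) E) (X : Matrix (Fin 2) (Fin 2) E) (v : V),
      ρ g ⁅X, v⁆ =
        ⁅(g : Matrix (Fin 2) (Fin 2) E) * X * ((g : Matrix (Fin 2) (Fin 2) E))⁻¹, (ρ g) v⁆)
    (hf : ∀ v : V,
      (∃ n : ℕ, 1 ≤ n ∧
        ((LieModule.toEnd E (Matrix (Fin 2) (Fin 2) E) V (single 0 1 1)) ^ n) v = 0) →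
      (∃ m : ℕ, 1 ≤ m ∧
        ((LieModule.toEnd E (Matrix (Fin 2) (Fin 2) E) V (single 1 0 1)) ^ m) v = 0))
    (v : V)
    (hv : ∃ n : ℕ, 1 ≤ n ∧
        ((LieModule.toEnd E (Matrix (Fin 2) (Fin 2) E) V (single 0 1 1)) ^ n) v = 0) :
    ∃ n : ℕ, 1 ≤ n ∧
        ((LieModule.toEnd E (Matrix (Fin 2) (Fin 2) E) V (single 0 1 1)) ^ n)
          (ρ wGL v) = 0 := by
  obtain ⟨m, hm, h0⟩ := hf v hv
  have hinv : ((wGL : GL (Fin 2) E) : Matrix (Fin 2) (Fin 2) E)⁻¹ = wMat :=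
    Matrix.inv_eq_right_inv wMat_mul_self
  have conj : ((wGL : GL (Fin 2) E) : Matrix (Fin 2) (Fin 2) E) * single 1 0 (1:E) *
      ((wGL : GL (Fin 2) E) : Matrix (Fin 2) (Fin 2) E)⁻¹ = single 0 1 (1:E) := by
    rw [hinv]
    show wMat * single 1 0 (1:E) * wMat = single 0 1 (1:E)
    ext i j
    fin_cases i <;> fin_cases j <;>
      simp [wMat, Matrix.mul_apply, Fin.sum_univ_two, Matrix.single, Matrix.vecHead, Matrix.vecTail]
  have := iter_compat ρ compat wGL (single 1 0 (1:E)) m v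
  rw [h0, map_zero, conj] at this
  exact ⟨m, hm, this.symm⟩

private lemma decomp (g : GL (Fin 2) E) (hg : (g : Matrix (Fin 2) (Fin 2) E) 1 0 ≠ 0) :
    ∃ b₁ b₂ : GL (Fin 2) E, (b₁ : Matrix (Fin 2) (Fin 2) E) 1 0 = 0 ∧
      (b₂ : Matrix (Fin 2) (Fin 2) E) 1 0 = 0 ∧ g = b₁ * wGL * b₂ := by
  set A : Matrix (Fin 2) (Fin 2) E := (g : Matrix (Fin 2) (Fin 2) E) with hA
  have hdet : A.det ≠ 0 := ((Matrix.isUnit_iff_isUnit_det _).mp g.isUnit).ne_zero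
  set B₁ : Matrix (Fin 2) (Fin 2) E :=
    !![-(A.det) * (A 1 0)⁻¹, A 0 0 * (A 1 0)⁻¹; 0, 1] with hB₁
  set B₂ : Matrix (Fin 2) (Fin 2) E := !![A 1 0, A 1 1; 0, 1] with hB₂
  have hd₁ : B₁.det ≠ 0 := by
    rw [hB₁, Matrix.det_fin_two_of]
    simpa using mul_ne_zero (neg_ne_zero.mpr hdet) (inv_ne_zero hg)
  have hd₂ : B₂.det ≠ 0 := by
    rw [hB₂, Matrix.det_fin_two_of]; simpa using hg
  refine ⟨Matrix.GeneralLinearGroup.mkOfDetNeZero B₁ hd₁,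
    Matrix.GeneralLinearGroup.mkOfDetNeZero B₂ hd₂, ?_, ?_, ?_⟩
  · show B₁ 1 0 = 0; rw [hB₁]; simp
  · show B₂ 1 0 = 0; rw [hB₂]; simp
  · apply Units.ext
    show A = B₁ * wMat * B₂
    have hdet2 : A.det = A 0 0 * A 1 1 - A 0 1 * A 1 0 := Matrix.det_fin_two A
    ext i j
    fin_cases i <;> fin_cases j <;>
      simp [hB₁, hB₂, wMat, Matrix.mul_apply, Fin.sum_univ_two] <;>
      field_simp <;> rw [hdet2] <;> ring

end Aux

open LieModule in
/-- Let `V` carry a `gl₂(E)`-Lie module structure `X · v = ⁅X, v⁆` and a linear action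
`ρ` of `GL₂(E)`, compatible in the sense that `ρ g ⁅X, v⁆ = ⁅g X g⁻¹, ρ g v⁆`.
Let `e = E₁₂`, `f = E₂₁`, and `M = {v | e^n · v = 0 for some n ≥ 1}`.
If every `v ∈ M` is annihilated by some power `f^m` (`m ≥ 1`) of `f`, then `M` is a
`GL₂(E)`-stable subspace of `V`. -/
theorem GL_stable_pow_e_kernel {E V : Type*} [Field E]
    [AddCommGroup V] [Module E V]
    [LieRingModule (Matrix (Fin 2) (Fin 2) E) V]
    [LieModule E (Matrix (Fin 2) (Fin 2) E) V]
    (ρ : GL (Fin 2) E →* (V →ₗ[E] V))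
    (compat : ∀ (g : GL (Fin 2) E) (X : Matrix (Fin 2) (Fin 2) E) (v : V),
      ρ g ⁅X, v⁆ =
        ⁅(g : Matrix (Fin 2) (Fin 2) E) * X * ((g : Matrix (Fin 2) (Fin 2) E))⁻¹, (ρ g) v⁆)
    (hf : ∀ v : V,
      (∃ n : ℕ, 1 ≤ n ∧
        ((LieModule.toEnd E (Matrix (Fin 2) (Fin 2) E) V (single 0 1 1)) ^ n) v = 0) →
      (∃ m : ℕ, 1 ≤ m ∧
        ((LieModule.toEnd E (Matrix (Fin 2) (Fin 2) E) V (single 1 0 1)) ^ m) v = 0)) :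
    ∃ M : Submodule E V,
      (M : Set V) = {v : V | ∃ n : ℕ, 1 ≤ n ∧
        ((LieModule.toEnd E (Matrix (Fin 2) (Fin 2) E) V (single 0 1 1)) ^ n) v = 0} ∧
      ∀ (g : GL (Fin 2) E), ∀ v ∈ M, ρ g v ∈ M := by
  set φ : Module.End E V :=
    LieModule.toEnd E (Matrix (Fin 2) (Fin 2) E) V (single 0 1 1) with hφ
  have mono : ∀ (v : V) (n N : ℕ), n ≤ N → (φ ^ n) v = 0 → (φ ^ N) v = 0 := by
    intro v n N hnN h
    obtain ⟨k, rfl⟩ := Nat.exists_eq_add_of_le hnN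
    rw [add_comm n k, pow_add, Module.End.mul_apply, h, map_zero]
  set M : Submodule E V :=
    { carrier := {v : V | ∃ n : ℕ, 1 ≤ n ∧ (φ ^ n) v = 0}
      add_mem' := by
        rintro a b ⟨n, hn, ha⟩ ⟨m, hm, hb⟩
        exact ⟨n + m, le_trans hn (Nat.le_add_right n m), by
          rw [map_add, mono a n (n + m) (Nat.le_add_right n m) ha,
            mono b m (n + m) (Nat.le_add_left m n) hb, add_zero]⟩
      zero_mem' := ⟨1, le_refl 1, by rw [map_zero]⟩
      smul_mem' := by
        rintro c v ⟨n, hn, hv⟩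
        exact ⟨n, hn, by rw [LinearMap.map_smul, hv, smul_zero]⟩ } with hM
  refine ⟨M, rfl, ?_⟩
  have step : ∀ (g : GL (Fin 2) E), ∀ v ∈ M, ρ g v ∈ M := by
    intro g v hv
    by_cases hg : (g : Matrix (Fin 2) (Fin 2) E) 1 0 = 0
    · exact upper_step ρ compat g hg v hv
    · obtain ⟨b₁, b₂, h₁, h₂, rfl⟩ := decomp g hg
      rw [_root_.map_mul, _root_.map_mul, Module.End.mul_apply, Module.End.mul_apply]
      exact upper_step ρ compat b₁ h₁ _ (w_step ρ compat hf _ (upper_step ρ compat b₂ h₂ v hv))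
  exact step
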